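/- (Theorem 2, equivalence.) Let k ≥ 1, let a₁, …, a_k and C be nonzero integers, 0 < ε ≤ 1/(4 Σᵢ |aᵢ|), P ≥ 2k/ε², and let f : ℝ^{2k} → ℝ be f(x) = (C - Σ_{i=1}^k aᵢ xᵢ)² + P · Σ_{i=1}^k (1 - xᵢ - x_{i+k})² + Σ_{i=1}^{2k} min(1, xᵢ²/ε²). Then there exists a subset S ⊆ {1, …, k} with Σ_{i∈S} aᵢ = C if and only if there exists x ∈ ℝ^{2k} with f(x) ≤ k. -/

import Mathlib

open BigOperators Finset

/-- The inclusion `{1, …, k} → {1, …, 2k}`, `i ↦ i`. -/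
def lo (k : ℕ) (i : Fin k) : Fin (2 * k) :=
  ⟨i.1, by have := i.2; omega⟩

/-- The shifted inclusion `{1, …, k} → {1, …, 2k}`, `i ↦ i + k`. -/
def hi (k : ℕ) (i : Fin k) : Fin (2 * k) :=
  ⟨i.1 + k, by have := i.2; omega⟩

/-- The objective function of Theorem 2:
`f(x) = (C - Σᵢ aᵢ xᵢ)² + P·Σᵢ (1 - xᵢ - x_{i+k})² + Σᵢ min(1, xᵢ²/ε²)`. -/
noncomputable def ffun (k : ℕ) (a : Fin k → ℤ) (C : ℤ) (P ε : ℝ)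
    (x : Fin (2 * k) → ℝ) : ℝ :=
  ((C : ℝ) - ∑ i : Fin k, (a i : ℝ) * x (lo k i)) ^ 2
    + P * ∑ i : Fin k, (1 - x (lo k i) - x (hi k i)) ^ 2
    + ∑ i : Fin (2 * k), min 1 (x i ^ 2 / ε ^ 2)

/-!
Split `f` into the squared residual `(C - Σ aᵢxᵢ)²` and `k` pair costs
`P(1 - xᵢ - x_{i+k})² + min(1, xᵢ²/ε²) + min(1, x_{i+k}²/ε²)`. Since `Pε² ≥ 2k > 1`, a pair with
`|1 - xᵢ - x_{i+k}| ≥ ε` costs more than `1` through the penalty alone; otherwise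
`xᵢ + x_{i+k} > 1 - ε ≥ 2ε`, so one coordinate exceeds `ε` and costs `1`. Thus `f ≥ k`, and
`f ≤ k` forces every pair to cost exactly `1`, i.e. to be `(1, 0)` or `(0, 1)`, and the residual
to vanish: the coordinates `xᵢ ∈ {0, 1}` select a good subset. Conversely the indicator of a good
subset, paired with its complement, gives `f = k`.
-/

section Pairs

noncomputable def cappedSq (ε t : ℝ) : ℝ := min 1 (t ^ 2 / ε ^ 2)

noncomputable def pairCost (P ε s t : ℝ) : ℝ :=
  P * (1 - s - t) ^ 2 + cappedSq ε s + cappedSq ε t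

variable {P ε s t : ℝ}

theorem cappedSq_nonneg (ε t : ℝ) : 0 ≤ cappedSq ε t :=
  le_min zero_le_one (by positivity)

@[simp]
theorem cappedSq_zero (ε : ℝ) : cappedSq ε 0 = 0 := by
  simp [cappedSq]

theorem cappedSq_eq_zero_iff (hε : ε ≠ 0) : cappedSq ε t = 0 ↔ t = 0 := by
  refine ⟨fun h => ?_, fun h => h ▸ cappedSq_zero ε⟩
  by_contra ht
  have : 0 < cappedSq ε t := lt_min one_pos (by positivity)
  linarith

theorem cappedSq_eq_one_of_le_abs (hε : 0 < ε) (h : ε ≤ |t|) : cappedSq ε t = 1 := by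
  refine min_eq_left ?_
  rw [le_div_iff₀ (by positivity), one_mul, ← sq_abs t]
  exact pow_le_pow_left₀ hε.le h 2

theorem cappedSq_eq_one_or_of_abs_lt (hε : 0 < ε) (hε3 : 3 * ε ≤ 1) (h : |1 - s - t| < ε) :
    cappedSq ε s = 1 ∨ cappedSq ε t = 1 := by
  have hst : 2 * ε < s + t := by linarith [(abs_lt.mp h).2]
  rcases le_total s t with hle | hle
  · exact .inr (cappedSq_eq_one_of_le_abs hε (by linarith [le_abs_self t]))
  · exact .inl (cappedSq_eq_one_of_le_abs hε (by linarith [le_abs_self s]))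

theorem mul_sq_le_mul_sq_of_le_abs (hε : 0 ≤ ε) (hP : 0 ≤ P) {u : ℝ} (h : ε ≤ |u|) :
    P * ε ^ 2 ≤ P * u ^ 2 :=
  mul_le_mul_of_nonneg_left (sq_abs u ▸ pow_le_pow_left₀ hε h 2) hP

theorem one_le_pairCost (hε : 0 < ε) (hε3 : 3 * ε ≤ 1) (hP : 1 ≤ P * ε ^ 2) (s t : ℝ) :
    1 ≤ pairCost P ε s t := by
  have hP0 : 0 ≤ P := by nlinarith [sq_nonneg ε]
  have hs := cappedSq_nonneg ε s
  have ht := cappedSq_nonneg ε t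
  have hres := mul_nonneg hP0 (sq_nonneg (1 - s - t))
  unfold pairCost
  rcases le_or_gt ε |1 - s - t| with hfar | hnear
  · linarith [mul_sq_le_mul_sq_of_le_abs hε.le hP0 hfar]
  · rcases cappedSq_eq_one_or_of_abs_lt hε hε3 hnear with h | h <;> linarith

theorem pairCost_one_zero (hε : 0 < ε) (hε1 : ε ≤ 1) : pairCost P ε 1 0 = 1 := by
  simp [pairCost, cappedSq_eq_one_of_le_abs (t := 1) hε (by simpa using hε1)]

theorem pairCost_comm (P ε s t : ℝ) : pairCost P ε s t = pairCost P ε t s := by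
  unfold pairCost; ring

theorem pairCost_le_one_iff (hε : 0 < ε) (hε3 : 3 * ε ≤ 1) (hP : 1 < P * ε ^ 2) :
    pairCost P ε s t ≤ 1 ↔ s = 1 ∧ t = 0 ∨ s = 0 ∧ t = 1 := by
  have hP0 : 0 < P := by nlinarith [sq_nonneg ε]
  constructor
  · intro h
    have vanish : ∀ {s t : ℝ}, pairCost P ε s t ≤ 1 → cappedSq ε s = 1 → s = 1 ∧ t = 0 := by
      intro s t h hs
      have ht := cappedSq_nonneg ε t
      have hres := mul_nonneg hP0.le (sq_nonneg (1 - s - t))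
      unfold pairCost at h
      have ht0 : t = 0 := (cappedSq_eq_zero_iff hε.ne').mp (by linarith)
      have hres0 : (1 - s - t) ^ 2 = 0 := by
        simpa [hP0.ne'] using (show P * (1 - s - t) ^ 2 = 0 by linarith)
      exact ⟨by linarith [pow_eq_zero_iff (n := 2) two_ne_zero |>.mp hres0], ht0⟩
    have hnear : |1 - s - t| < ε := by
      by_contra! hfar
      have := mul_sq_le_mul_sq_of_le_abs hε.le hP0.le hfar
      unfold pairCost at h
      linarith [cappedSq_nonneg ε s, cappedSq_nonneg ε t]
    rcases cappedSq_eq_one_or_of_abs_lt hε hε3 hnear with hs | ht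
    · exact .inl (vanish h hs)
    · exact .inr (vanish (pairCost_comm P ε s t ▸ h) ht).symm
  · rintro (⟨rfl, rfl⟩ | ⟨rfl, rfl⟩)
    · exact (pairCost_one_zero hε (by linarith)).le
    · exact (pairCost_comm P ε 0 1 ▸ pairCost_one_zero hε (by linarith)).le

end Pairs

section Coordinates

variable {k : ℕ}

def pairEquiv (k : ℕ) : Fin k ⊕ Fin k ≃ Fin (2 * k) :=
  finSumFinEquiv.trans (finCongr (two_mul k).symm)

@[simp]
theorem pairEquiv_inl (i : Fin k) : pairEquiv k (.inl i) = lo k i := by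
  ext; simp [pairEquiv, lo]

@[simp]
theorem pairEquiv_inr (i : Fin k) : pairEquiv k (.inr i) = hi k i := by
  ext; simp [pairEquiv, hi, add_comm]

theorem sum_fin_two_mul {M : Type*} [AddCommMonoid M] (g : Fin (2 * k) → M) :
    ∑ j, g j = ∑ i, g (lo k i) + ∑ i, g (hi k i) := by
  simp [← (pairEquiv k).sum_comp g, Fintype.sum_sum_type]

def pairPoint (u v : Fin k → ℝ) : Fin (2 * k) → ℝ :=
  Sum.elim u v ∘ (pairEquiv k).symm

@[simp]
theorem pairPoint_lo (u v : Fin k → ℝ) (i : Fin k) : pairPoint u v (lo k i) = u i := by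
  simp [pairPoint, ← pairEquiv_inl]

@[simp]
theorem pairPoint_hi (u v : Fin k → ℝ) (i : Fin k) : pairPoint u v (hi k i) = v i := by
  simp [pairPoint, ← pairEquiv_inr]

theorem ffun_eq_sq_add_sum_pairCost (a : Fin k → ℤ) (C : ℤ) (P ε : ℝ) (x : Fin (2 * k) → ℝ) :
    ffun k a C P ε x = ((C : ℝ) - ∑ i, (a i : ℝ) * x (lo k i)) ^ 2
      + ∑ i, pairCost P ε (x (lo k i)) (x (hi k i)) := by
  rw [ffun, sum_fin_two_mul]
  simp only [pairCost, cappedSq, sum_add_distrib, mul_sum]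
  ring

end Coordinates

section Reduction

variable {k : ℕ} {a : Fin k → ℤ} {C : ℤ} {P ε : ℝ}

theorem ffun_pairPoint_indicator (hε : 0 < ε) (hε1 : ε ≤ 1) (S : Finset (Fin k)) :
    ffun k a C P ε (pairPoint (fun i => if i ∈ S then 1 else 0)
      (fun i => if i ∈ S then 0 else 1)) = ((C : ℝ) - ∑ i ∈ S, (a i : ℝ)) ^ 2 + k := by
  have hpair : ∀ i, pairCost P ε (if i ∈ S then 1 else 0) (if i ∈ S then 0 else 1) = 1 := by
    intro i
    split_ifs
    · exact pairCost_one_zero hε hε1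
    · exact pairCost_comm P ε 0 1 ▸ pairCost_one_zero hε hε1
  simp [ffun_eq_sq_add_sum_pairCost, hpair, mul_ite, sum_ite_mem]

theorem exists_sum_eq_of_ffun_le (hε : 0 < ε) (hε3 : 3 * ε ≤ 1) (hP : 2 * k ≤ P * ε ^ 2)
    {x : Fin (2 * k) → ℝ} (hx : ffun k a C P ε x ≤ k) : ∃ S : Finset (Fin k), ∑ i ∈ S, a i = C := by
  have hP1 (i : Fin k) : 1 < P * ε ^ 2 := by
    have : (1 : ℝ) ≤ k := by exact_mod_cast i.pos
    linarith
  rw [ffun_eq_sq_add_sum_pairCost] at hx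
  have hge (i : Fin k) : 1 ≤ pairCost P ε (x (lo k i)) (x (hi k i)) :=
    one_le_pairCost hε hε3 (hP1 i).le _ _
  have hlower : (k : ℝ) ≤ ∑ i, pairCost P ε (x (lo k i)) (x (hi k i)) := by
    simpa using sum_le_sum (s := univ) fun i _ => hge i
  have hres := sq_nonneg ((C : ℝ) - ∑ i, (a i : ℝ) * x (lo k i))
  -- `f(x) ≤ k` leaves no room above the lower bound `k`: every pair costs exactly `1`
  have hcost : ∑ i : Fin k, (1 : ℝ) = ∑ i, pairCost P ε (x (lo k i)) (x (hi k i)) := by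
    simp only [sum_const, card_univ, Fintype.card_fin, nsmul_eq_mul, mul_one]
    linarith
  have hbit (i : Fin k) : x (lo k i) = 1 ∧ x (hi k i) = 0 ∨ x (lo k i) = 0 ∧ x (hi k i) = 1 :=
    (pairCost_le_one_iff hε hε3 (hP1 i)).mp
      ((sum_eq_sum_iff_of_le fun i _ => hge i).mp hcost i (mem_univ i)).ge
  refine ⟨univ.filter fun i => x (lo k i) = 1, ?_⟩
  have hsel : ∑ i, (a i : ℝ) * x (lo k i) = ∑ i ∈ univ.filter fun i => x (lo k i) = 1, (a i : ℝ) := by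
    rw [sum_filter]
    refine sum_congr rfl fun i _ => ?_
    rcases hbit i with ⟨h, -⟩ | ⟨h, -⟩ <;> simp [h]
  have : ((C : ℝ) - ∑ i, (a i : ℝ) * x (lo k i)) ^ 2 = 0 := by linarith
  exact_mod_cast (sub_eq_zero.mp (pow_eq_zero_iff two_ne_zero |>.mp this) ▸ hsel).symm

end Reduction

theorem four_mul_le_one_of_le_one_div_sum_abs {ι : Type*} [Fintype ι] {a : ι → ℤ} {ε : ℝ}
    (hε : 0 < ε) (h : ε ≤ 1 / (4 * ∑ i, |(a i : ℝ)|)) : 4 * ε ≤ 1 := by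
  have hpos : 0 < ∑ i, |(a i : ℝ)| := by
    by_contra! h0
    linarith [div_nonpos_of_nonneg_of_nonpos zero_le_one (by linarith : 4 * ∑ i, |(a i : ℝ)| ≤ 0)]
  -- an integer sum, so positive means at least `1`
  have h1 : 1 ≤ ∑ i, |(a i : ℝ)| := by
    have hcast : ∑ i, |(a i : ℝ)| = ((∑ i, |a i| : ℤ) : ℝ) := by push_cast; rfl
    rw [hcast] at hpos ⊢
    exact_mod_cast hpos
  rw [le_div_iff₀ (by positivity)] at h
  nlinarith

theorem goodSubset_iff_exists_ffun_le_general
    (k : ℕ) (a : Fin k → ℤ) (C : ℤ) (ε P : ℝ)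
    (hε : 0 < ε) (hε' : ε ≤ 1 / (4 * ∑ i, |(a i : ℝ)|)) (hP : 2 * k / ε ^ 2 ≤ P) :
    (∃ S : Finset (Fin k), ∑ i ∈ S, a i = C)
      ↔ ∃ x : Fin (2 * k) → ℝ, ffun k a C P ε x ≤ k := by
  have hε4 : 4 * ε ≤ 1 := four_mul_le_one_of_le_one_div_sum_abs hε hε'
  have hPε : 2 * k ≤ P * ε ^ 2 := (div_le_iff₀ (by positivity)).mp hP
  constructor
  · rintro ⟨S, hS⟩
    refine ⟨_, (ffun_pairPoint_indicator (a := a) (C := C) (P := P) hε (by linarith) S).le.trans ?_⟩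
    simp [← hS]
  · rintro ⟨x, hx⟩
    exact exists_sum_eq_of_ffun_le hε (by linarith) hPε hx

/-- Theorem 2, equivalence: a good subset `S` with `Σ_{i∈S} aᵢ = C` exists
if and only if there exists `x ∈ ℝ^{2k}` with `f(x) ≤ k`. -/
theorem goodSubset_iff_exists_ffun_le
    (k : ℕ) (hk : 1 ≤ k) (a : Fin k → ℤ) (C : ℤ)
    (ha : ∀ i, a i ≠ 0) (hC : C ≠ 0) (ε P : ℝ)
    (hε : 0 < ε) (hε' : ε ≤ 1 / (4 * ∑ i, |(a i : ℝ)|)) (hP : 2 * k / ε ^ 2 ≤ P) :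
    (∃ S : Finset (Fin k), ∑ i ∈ S, a i = C)
      ↔ ∃ x : Fin (2 * k) → ℝ, ffun k a C P ε x ≤ k :=
  goodSubset_iff_exists_ffun_le_general k a C ε P hε hε' hP
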